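/- Let m ≥ 1, r ≥ 1 and p, q ∈ [1,∞) with q ≥ p and 1/r − m/p + m/q > 0, and let s be defined by 1/s = 1/r − m/p + m/q. Then every multiple (r; p,…,p)-summing m-linear operator T : X₁ × ⋯ × X_m → Y is multiple (s; q,…,q)-summing, and π_{(s;q)}(T) ≤ π_{(r;p)}(T). -/

import Mathlib

/-!
For `p < q` put `1/t = 1/p − 1/q`. By Hölder, rescaling the `k`-th family by weights `λ^k` with
`‖λ^k‖_t ≤ 1` yields a family whose weak `ℓ_p` norm is at most the weak `ℓ_q` norm of the original.
Applying the `(r;p)` inequality to the rescaled families, it remains to choose weights with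
`(∑_j ‖T x_j‖^s)^(1/s) ≤ (∑_j (∏_k λ^k_{j_k} ‖T x_j‖)^r)^(1/r)`. With `a_j = ‖T x_j‖^s`,
`S = ∑_j a_j` and `A^k` the `k`-th marginal of `a`, take `λ^k_i = (A^k_i / S)^(1/t)`: since
`a_j ≤ A^k_{j_k}`, the `j`-th term on the right is at least `a_j / S^(r m/t)`, and these sum to
`S^(1 − r m/t) = S^(r/s)`.
-/

open scoped BigOperators

/-- The weak ℓ^p norm of a finite family in a normed space:
`sup_{φ ∈ B_{X'}} (∑ j |φ(x_j)|^p)^(1/p)`. -/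
noncomputable def weakNorm {X : Type*} [NormedAddCommGroup X] [NormedSpace ℝ X]
    {n : ℕ} (x : Fin n → X) (p : ℝ) : ℝ :=
  ⨆ φ : {φ : X →L[ℝ] ℝ // ‖φ‖ ≤ 1}, (∑ j, |φ.1 (x j)| ^ p) ^ (1 / p)

/-- The set of admissible constants for an `m`-linear operator `T` being
multiple `(r; p,…,p)`-summing. -/
def multSummingConsts {m : ℕ} {X : Fin m → Type*} [∀ k, NormedAddCommGroup (X k)]
    [∀ k, NormedSpace ℝ (X k)] {Y : Type*} [NormedAddCommGroup Y] [NormedSpace ℝ Y]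
    (T : ContinuousMultilinearMap ℝ X Y) (r p : ℝ) : Set ℝ :=
  {C | 0 ≤ C ∧ ∀ (n : Fin m → ℕ) (x : ∀ k, Fin (n k) → X k),
    (∑ j : ∀ k, Fin (n k), ‖T (fun k => x k (j k))‖ ^ r) ^ (1 / r) ≤
      C * ∏ k, weakNorm (x k) p}

open Finset

section WeakNorm

variable {X : Type*} [NormedAddCommGroup X] [NormedSpace ℝ X] {n : ℕ}

lemma weakNorm_nonneg (x : Fin n → X) (p : ℝ) : 0 ≤ weakNorm x p :=
  Real.iSup_nonneg fun _ =>
    Real.rpow_nonneg (sum_nonneg fun _ _ => Real.rpow_nonneg (abs_nonneg _) _) _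

lemma rpow_sum_le_weakNorm (x : Fin n → X) {p : ℝ} (hp : 0 < p)
    (φ : {φ : X →L[ℝ] ℝ // ‖φ‖ ≤ 1}) :
    (∑ j, |φ.1 (x j)| ^ p) ^ (1 / p) ≤ weakNorm x p := by
  refine le_ciSup (f := fun ψ : {φ : X →L[ℝ] ℝ // ‖φ‖ ≤ 1} => (∑ j, |ψ.1 (x j)| ^ p) ^ (1 / p))
    ⟨(∑ j, ‖x j‖ ^ p) ^ (1 / p), ?_⟩ φ
  rintro _ ⟨ψ, rfl⟩
  dsimp only
  gcongr with j
  calc |ψ.1 (x j)| = ‖ψ.1 (x j)‖ := (Real.norm_eq_abs _).symm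
    _ ≤ ‖ψ.1‖ * ‖x j‖ := ψ.1.le_opNorm _
    _ ≤ ‖x j‖ := mul_le_of_le_one_left (norm_nonneg _) ψ.2

instance : Nonempty {φ : X →L[ℝ] ℝ // ‖φ‖ ≤ 1} := ⟨⟨0, by simp⟩⟩

lemma weakNorm_smul_le (x : Fin n → X) {w : Fin n → ℝ} (hw : ∀ j, 0 ≤ w j) {p q t : ℝ}
    (htqp : t.HolderTriple q p) :
    weakNorm (fun j => w j • x j) p ≤ (∑ j, w j ^ t) ^ (1 / t) * weakNorm x q := by
  have hp := htqp.pos'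
  have hA : 0 ≤ ∑ j, w j ^ t := sum_nonneg fun j _ => Real.rpow_nonneg (hw j) _
  refine ciSup_le fun φ => ?_
  have hB : 0 ≤ ∑ j, |φ.1 (x j)| ^ q := sum_nonneg fun j _ => Real.rpow_nonneg (abs_nonneg _) _
  calc (∑ j, |φ.1 (w j • x j)| ^ p) ^ (1 / p)
      = (∑ j, (w j * |φ.1 (x j)|) ^ p) ^ (1 / p) := by
        simp only [map_smul, smul_eq_mul, abs_mul, abs_of_nonneg (hw _)]
    _ ≤ ((∑ j, w j ^ t) ^ (p / t) * (∑ j, |φ.1 (x j)| ^ q) ^ (p / q)) ^ (1 / p) := by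
        refine Real.rpow_le_rpow (sum_nonneg fun j _ => by have := hw j; positivity) ?_
          (by positivity)
        exact Real.Lr_rpow_le_Lp_mul_Lq_of_nonneg univ htqp (fun j _ => hw j)
          (fun j _ => abs_nonneg _)
    _ = (∑ j, w j ^ t) ^ (1 / t) * (∑ j, |φ.1 (x j)| ^ q) ^ (1 / q) := by
        rw [Real.mul_rpow (Real.rpow_nonneg hA _) (Real.rpow_nonneg hB _), ← Real.rpow_mul hA,
          ← Real.rpow_mul hB]
        field_simp
    _ ≤ (∑ j, w j ^ t) ^ (1 / t) * weakNorm x q := by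
        gcongr
        exact rpow_sum_le_weakNorm x htqp.symm.pos φ

end WeakNorm

lemma rpow_div_rpow_le_mul_rpow {a S c r s u : ℝ} (ha : 0 ≤ a) (hS : 0 < S) (hr : 0 < r)
    (hs : 0 < s) (hc : (a ^ s / S) ^ u ≤ c) (hrsu : s * (r * u) + r = s) :
    a ^ s / S ^ (r * u) ≤ (c * a) ^ r := by
  rcases ha.eq_or_lt with rfl | ha
  · simp [Real.zero_rpow hs.ne', Real.zero_rpow hr.ne']
  calc a ^ s / S ^ (r * u) = ((a ^ s / S) ^ u * a) ^ r := by
        rw [Real.mul_rpow (by positivity) ha.le, ← Real.rpow_mul (by positivity),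
          Real.div_rpow (by positivity) hS.le, ← Real.rpow_mul ha.le, div_mul_eq_mul_div,
          ← Real.rpow_add ha, mul_comm u r, hrsu]
    _ ≤ (c * a) ^ r := by gcongr

section Marginal

variable {κ : Type*} [Fintype κ] [DecidableEq κ] {ι : κ → Type*} [∀ k, Fintype (ι k)]
  [∀ k, DecidableEq (ι k)]

def marginal (a : (∀ k, ι k) → ℝ) (k : κ) (i : ι k) : ℝ := ∑ j with j k = i, a j

lemma sum_marginal (a : (∀ k, ι k) → ℝ) (k : κ) : ∑ i, marginal a k i = ∑ j, a j := by
  rw [← sum_fiberwise univ (fun j => j k) a]; rfl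

variable {a : (∀ k, ι k) → ℝ}

lemma marginal_nonneg (ha : 0 ≤ a) (k : κ) (i : ι k) : 0 ≤ marginal a k i :=
  sum_nonneg fun j _ => ha j

lemma le_marginal (ha : 0 ≤ a) (j : ∀ k, ι k) (k : κ) : a j ≤ marginal a k (j k) :=
  single_le_sum (f := a) (fun j _ => ha j) (by simp)

theorem exists_weights_rpow_sum_le (ha : 0 ≤ a) {r s t : ℝ} (hr : 0 < r) (hs : 0 < s)
    (ht : 0 < t) (hrst : Fintype.card κ / t = 1 / r - 1 / s) :
    ∃ w : ∀ k, ι k → ℝ, (∀ k i, 0 ≤ w k i) ∧ (∀ k, ∑ i, w k i ^ t ≤ 1) ∧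
      (∑ j, a j ^ s) ^ (1 / s) ≤ (∑ j, ((∏ k, w k (j k)) * a j) ^ r) ^ (1 / r) := by
  set S := ∑ j, a j ^ s
  have hb : 0 ≤ fun j => a j ^ s := fun j => Real.rpow_nonneg (ha j) s
  have hS0 : 0 ≤ S := sum_nonneg fun j _ => hb j
  rcases hS0.eq_or_lt with hS | hS
  · refine ⟨0, fun _ _ => le_rfl, fun k => by simp [Real.zero_rpow ht.ne'], ?_⟩
    rw [← hS, Real.zero_rpow (one_div_pos.2 hs).ne']
    exact Real.rpow_nonneg (sum_nonneg fun j _ =>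
      Real.rpow_nonneg (mul_nonneg (prod_nonneg fun _ _ => le_rfl) (ha j)) _) _
  set w : ∀ k, ι k → ℝ := fun k i => (marginal (fun j => a j ^ s) k i / S) ^ t⁻¹
  have hw : ∀ k i, 0 ≤ w k i := fun k i =>
    Real.rpow_nonneg (div_nonneg (marginal_nonneg hb k i) hS.le) _
  have hw_sum : ∀ k, ∑ i, w k i ^ t = 1 := fun k => by
    simp_rw [w, Real.rpow_inv_rpow (div_nonneg (marginal_nonneg hb k _) hS.le) ht.ne',
      ← sum_div, sum_marginal]
    exact div_self hS.ne'
  have hw_prod : ∀ j, (a j ^ s / S) ^ (Fintype.card κ / t) ≤ ∏ k, w k (j k) := fun j =>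
    have hj : 0 ≤ a j ^ s / S := div_nonneg (hb j) hS.le
    calc (a j ^ s / S) ^ (Fintype.card κ / t) = ∏ _k : κ, (a j ^ s / S) ^ t⁻¹ := by
          rw [prod_const, card_univ, ← Real.rpow_natCast, ← Real.rpow_mul hj, inv_mul_eq_div]
      _ ≤ ∏ k, w k (j k) := prod_le_prod (fun _ _ => Real.rpow_nonneg hj _) fun k _ =>
          Real.rpow_le_rpow hj
            (div_le_div_of_nonneg_right (le_marginal hb j k) hS.le) (inv_nonneg.2 ht.le)
  have hsum : S ^ (r / s) ≤ ∑ j, ((∏ k, w k (j k)) * a j) ^ r :=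
    calc S ^ (r / s) = ∑ j, a j ^ s / S ^ (r * (Fintype.card κ / t)) := by
          rw [← sum_div, eq_div_iff (by positivity), ← Real.rpow_add hS, hrst,
            show r / s + r * (1 / r - 1 / s) = 1 by field_simp; ring, Real.rpow_one]
      _ ≤ _ := sum_le_sum fun j _ => rpow_div_rpow_le_mul_rpow (ha j) hS hr hs (hw_prod j)
          (by rw [hrst]; field_simp; ring)
  refine ⟨w, hw, fun k => (hw_sum k).le, ?_⟩
  calc S ^ (1 / s) = (S ^ (r / s)) ^ (1 / r) := by rw [← Real.rpow_mul hS.le]; field_simp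
    _ ≤ _ := by gcongr

end Marginal

theorem multSummingConsts_subset {m : ℕ} {X : Fin m → Type*} [∀ k, NormedAddCommGroup (X k)]
    [∀ k, NormedSpace ℝ (X k)] {Y : Type*} [NormedAddCommGroup Y] [NormedSpace ℝ Y]
    (T : ContinuousMultilinearMap ℝ X Y) {r s p q : ℝ} (hp : 0 < p) (hpq : p ≤ q) (hs : 0 < s)
    (hsdef : 1 / s = 1 / r - m / p + m / q) :
    multSummingConsts T r p ⊆ multSummingConsts T s q := by
  rcases hpq.eq_or_lt with rfl | hpq
  · obtain rfl : s = r := by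
      have : 1 / s = 1 / r := by rw [hsdef]; ring
      simpa using this
    exact subset_rfl
  set t := (p⁻¹ - q⁻¹)⁻¹
  have hq : 0 < q := hp.trans hpq
  have ht : 0 < t := inv_pos.2 (sub_pos.2 (inv_strictAnti₀ hp hpq))
  have ht_inv : t⁻¹ = p⁻¹ - q⁻¹ := inv_inv _
  have htqp : t.HolderTriple q p := ⟨by rw [ht_inv]; ring, ht, hq⟩
  have hrst : (Fintype.card (Fin m) : ℝ) / t = 1 / r - 1 / s := by
    rw [Fintype.card_fin, hsdef, div_eq_mul_inv, ht_inv]; ring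
  have hr : 0 < r := by
    have : 0 ≤ (Fintype.card (Fin m) : ℝ) / t := by positivity
    exact one_div_pos.1 (by linarith [one_div_pos.2 hs])
  rintro C ⟨hC0, hC⟩
  refine ⟨hC0, fun n x => ?_⟩
  obtain ⟨w, hw0, hw1, hle⟩ := exists_weights_rpow_sum_le
    (a := fun j : ∀ k, Fin (n k) => ‖T fun k => x k (j k)‖) (fun _ => norm_nonneg _) hr hs ht hrst
  have hweak : ∀ k, weakNorm (fun i => w k i • x k i) p ≤ weakNorm (x k) q := fun k =>
    calc _ ≤ (∑ i, w k i ^ t) ^ (1 / t) * weakNorm (x k) q := weakNorm_smul_le (x k) (hw0 k) htqp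
      _ ≤ weakNorm (x k) q := mul_le_of_le_one_left (weakNorm_nonneg _ _)
          (Real.rpow_le_one (sum_nonneg fun i _ => Real.rpow_nonneg (hw0 k i) _) (hw1 k)
            (by positivity))
  calc _ ≤ _ := hle
    _ = (∑ j : ∀ k, Fin (n k), ‖T fun k => w k (j k) • x k (j k)‖ ^ r) ^ (1 / r) := by
        simp_rw [T.map_smul_univ, norm_smul, Real.norm_eq_abs,
          abs_of_nonneg (prod_nonneg fun k _ => hw0 k _)]
    _ ≤ C * ∏ k, weakNorm (fun i => w k i • x k i) p := hC n fun k i => w k i • x k i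
    _ ≤ C * ∏ k, weakNorm (x k) q := mul_le_mul_of_nonneg_left
        (prod_le_prod (fun k _ => weakNorm_nonneg _ _) fun k _ => hweak k) hC0

theorem isotropic_inclusion_PSST_general
    (m : ℕ)
    {X : Fin m → Type*} [∀ k, NormedAddCommGroup (X k)] [∀ k, NormedSpace ℝ (X k)]
    {Y : Type*} [NormedAddCommGroup Y] [NormedSpace ℝ Y]
    (T : ContinuousMultilinearMap ℝ X Y)
    (r s p q : ℝ) (hp : 1 ≤ p) (hpq : p ≤ q)
    (hpos : 0 < 1 / r - m / p + m / q)
    (hsdef : 1 / s = 1 / r - m / p + m / q)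
    (hT : (multSummingConsts T r p).Nonempty) :
    (multSummingConsts T s q).Nonempty ∧
      sInf (multSummingConsts T s q) ≤ sInf (multSummingConsts T r p) := by
  have hsub := multSummingConsts_subset T (zero_lt_one.trans_le hp) hpq
    (one_div_pos.1 (hsdef ▸ hpos)) hsdef
  exact ⟨hT.mono hsub, csInf_le_csInf ⟨0, fun _ hC => hC.1⟩ hT hsub⟩

/-- **Isotropic inclusion theorem for multiple summing operators
(Pellegrino–Santos–Serrano–Teixeira).** If `q ≥ p`, `1/r − m/p + m/q > 0` and
`1/s = 1/r − m/p + m/q`, then every multiple `(r;p)`-summing `m`-linear operator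
is multiple `(s;q)`-summing, and `π_{(s;q)}(T) ≤ π_{(r;p)}(T)`. -/
theorem isotropic_inclusion_PSST
    (m : ℕ) (hm : 0 < m)
    {X : Fin m → Type*} [∀ k, NormedAddCommGroup (X k)] [∀ k, NormedSpace ℝ (X k)]
    [∀ k, CompleteSpace (X k)]
    {Y : Type*} [NormedAddCommGroup Y] [NormedSpace ℝ Y] [CompleteSpace Y]
    (T : ContinuousMultilinearMap ℝ X Y)
    (r s p q : ℝ) (hr : 1 ≤ r) (hp : 1 ≤ p) (hpq : p ≤ q)
    (hpos : 0 < 1 / r - m / p + m / q)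
    (hsdef : 1 / s = 1 / r - m / p + m / q)
    (hT : (multSummingConsts T r p).Nonempty) :
    (multSummingConsts T s q).Nonempty ∧
      sInf (multSummingConsts T s q) ≤ sInf (multSummingConsts T r p) :=
  isotropic_inclusion_PSST_general m T r s p q hp hpq hpos hsdef hT
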